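/- Let J be a finite set of jobs equipped with a strict total order ≺ (the execution order), and suppose δ : J × J → {0,1} satisfies (i) Σ_{a,b} δ(a,b) = |J| − 1, (ii) each job has at most one δ-successor and at most one δ-predecessor, and (iii) δ(a,b) = 1 implies a ≺ b. Then δ(a,b) = 1 holds exactly when b is the immediate successor of a in the order ≺; i.e., δ is uniquely determined by ≺ as the covering relation of ≺. -/
import Mathlib

open Finset

private lemma stmt17_key {n : ℕ} (D : Fin n → Fin n → ℕ)
    (hbin : ∀ i j, D i j = 0 ∨ D i j = 1)
    (htot : ∑ i, ∑ j, D i j = n - 1)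
    (hsucc : ∀ i, ∑ j, D i j ≤ 1)
    (hpred : ∀ j, ∑ i, D i j ≤ 1)
    (hord : ∀ i j, D i j = 1 → i < j) :
    ∀ i j : Fin n, D i j = 1 ↔ (j : ℕ) = (i : ℕ) + 1 := by
  rcases n with _ | m
  · exact fun i => i.elim0
  -- column and row sums
  set C : Fin (m + 1) → ℕ := fun j => ∑ i, D i j with hC
  set R : Fin (m + 1) → ℕ := fun i => ∑ j, D i j with hR
  have hCle : ∀ j, C j ≤ 1 := fun j => hpred j
  have hRle : ∀ i, R i ≤ 1 := fun i => hsucc i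
  have hDzero : ∀ i j : Fin (m + 1), ¬ i < j → D i j = 0 := by
    intro i j h
    rcases hbin i j with h0 | h1
    · exact h0
    · exact absurd (hord i j h1) h
  have hC0 : C 0 = 0 := Finset.sum_eq_zero fun i _ =>
    hDzero i 0 (by simp [Fin.lt_def])
  have hRlast : R (Fin.last m) = 0 := Finset.sum_eq_zero fun j _ =>
    hDzero (Fin.last m) j (by simp [Fin.lt_def]; omega)
  have hsumR : ∑ i, R i = m := by simpa using htot
  have hsumC : ∑ j, C j = m := by rw [hC, Finset.sum_comm]; simpa using htot
  have hC1 : ∀ j : Fin (m + 1), j ≠ 0 → C j = 1 := by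
    intro j hj
    by_contra hne
    have hCj : C j = 0 := by have := hCle j; omega
    have hmem : j ∈ (univ : Finset (Fin (m+1))).erase 0 := by simp [hj]
    have e1 : ∑ x, C x = C 0 + ∑ x ∈ (univ : Finset (Fin (m+1))).erase 0, C x :=
      (Finset.add_sum_erase _ _ (mem_univ 0)).symm
    have e2 : ∑ x ∈ (univ : Finset (Fin (m+1))).erase 0, C x
        = C j + ∑ x ∈ ((univ : Finset (Fin (m+1))).erase 0).erase j, C x :=
      (Finset.add_sum_erase _ _ hmem).symm
    have hb : ∑ x ∈ ((univ : Finset (Fin (m+1))).erase 0).erase j, C x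
        ≤ ((((univ : Finset (Fin (m+1))).erase 0).erase j).card) * 1 :=
      Finset.sum_le_card_nsmul _ _ 1 (fun x _ => hCle x)
    have hcard : (((univ : Finset (Fin (m+1))).erase 0).erase j).card = m - 1 := by
      rw [Finset.card_erase_of_mem hmem, Finset.card_erase_of_mem (mem_univ 0)]
      simp
    have hj1 : 1 ≤ (j : ℕ) := by
      rcases Nat.eq_zero_or_pos (j : ℕ) with h | h
      · exact absurd (Fin.ext h) hj
      · exact h
    have hjm : (j : ℕ) ≤ m := Nat.lt_succ_iff.mp j.isLt
    omega
  have hR1 : ∀ i : Fin (m + 1), i ≠ Fin.last m → R i = 1 := by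
    intro i hi
    by_contra hne
    have hRi : R i = 0 := by have := hRle i; omega
    have hmem : i ∈ (univ : Finset (Fin (m+1))).erase (Fin.last m) := by simp [hi]
    have e1 : ∑ x, R x = R (Fin.last m) + ∑ x ∈ (univ : Finset (Fin (m+1))).erase (Fin.last m), R x :=
      (Finset.add_sum_erase _ _ (mem_univ _)).symm
    have e2 : ∑ x ∈ (univ : Finset (Fin (m+1))).erase (Fin.last m), R x
        = R i + ∑ x ∈ ((univ : Finset (Fin (m+1))).erase (Fin.last m)).erase i, R x :=
      (Finset.add_sum_erase _ _ hmem).symm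
    have hb : ∑ x ∈ ((univ : Finset (Fin (m+1))).erase (Fin.last m)).erase i, R x
        ≤ ((((univ : Finset (Fin (m+1))).erase (Fin.last m)).erase i).card) * 1 :=
      Finset.sum_le_card_nsmul _ _ 1 (fun x _ => hRle x)
    have hcard : (((univ : Finset (Fin (m+1))).erase (Fin.last m)).erase i).card = m - 1 := by
      rw [Finset.card_erase_of_mem hmem, Finset.card_erase_of_mem (mem_univ _)]
      simp
    have him : (i : ℕ) < m := by
      have h2 := Nat.lt_succ_iff.mp i.isLt
      rcases Nat.lt_or_ge (i : ℕ) m with h | h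
      · exact h
      · exact absurd (Fin.ext (by omega : (i : ℕ) = (Fin.last m : Fin (m+1)))) hi
    omega
  -- the integer sum argument
  set S : ℤ := ∑ x : Fin (m + 1), (x : ℤ) with hS
  have T1 : ∑ i : Fin (m+1), ∑ j, (D i j : ℤ) * (j : ℤ) = S := by
    rw [Finset.sum_comm, hS]
    refine Finset.sum_congr rfl fun j _ => ?_
    rw [← Finset.sum_mul]
    have hcast : ∑ i, (D i j : ℤ) = (C j : ℤ) := (Nat.cast_sum _ _).symm
    rcases eq_or_ne j 0 with rfl | hj
    · simp
    · rw [hcast, hC1 j hj]; simp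
  have T2 : ∑ i : Fin (m+1), ∑ j, (D i j : ℤ) * (i : ℤ) = S - m := by
    have key : ∀ i : Fin (m+1), ∑ j, (D i j : ℤ) * (i : ℤ)
        = (if i = Fin.last m then 0 else (i : ℤ)) := by
      intro i
      rw [← Finset.sum_mul]
      have hcast : ∑ j, (D i j : ℤ) = (R i : ℤ) := (Nat.cast_sum _ _).symm
      rcases eq_or_ne i (Fin.last m) with rfl | hi
      · simp [hcast, hRlast]
      · rw [hcast, hR1 i hi, if_neg hi]; simp
    rw [Finset.sum_congr rfl fun i _ => key i]
    rw [← Finset.add_sum_erase _ (fun i : Fin (m+1) => if i = Fin.last m then (0:ℤ) else (i : ℤ))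
        (mem_univ (Fin.last m))]
    rw [if_pos rfl]
    rw [Finset.sum_congr rfl (fun x hx => if_neg (Finset.ne_of_mem_erase hx))]
    have hS' : S = (Fin.last m : Fin (m+1)) + ∑ x ∈ (univ : Finset (Fin (m+1))).erase (Fin.last m), (x : ℤ) :=
      (Finset.add_sum_erase _ _ (mem_univ _)).symm
    have hl : ((Fin.last m : Fin (m+1)) : ℤ) = m := by simp
    rw [hS', hl]
    ring
  have T3 : ∑ i : Fin (m+1), ∑ j, (D i j : ℤ) = m := by
    have : ((∑ i : Fin (m+1), ∑ j, D i j : ℕ) : ℤ) = (m : ℤ) := by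
      rw [htot]; simp
    rw [← this]
    push_cast
    rfl
  have hgsum : ∑ p : Fin (m+1) × Fin (m+1), (D p.1 p.2 : ℤ) * ((p.2 : ℤ) - (p.1 : ℤ) - 1) = 0 := by
    rw [Fintype.sum_prod_type]
    have expand : ∀ i j : Fin (m+1), (D i j : ℤ) * ((j : ℤ) - (i : ℤ) - 1)
        = (D i j : ℤ) * (j : ℤ) - (D i j : ℤ) * (i : ℤ) - (D i j : ℤ) := by
      intro i j; ring
    calc ∑ i : Fin (m+1), ∑ j, (D i j : ℤ) * ((j : ℤ) - (i : ℤ) - 1)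
        = ∑ i : Fin (m+1), ∑ j, ((D i j : ℤ) * (j : ℤ) - (D i j : ℤ) * (i : ℤ) - (D i j : ℤ)) := by
          exact Finset.sum_congr rfl fun i _ => Finset.sum_congr rfl fun j _ => expand i j
      _ = (∑ i : Fin (m+1), ∑ j, (D i j : ℤ) * (j : ℤ))
          - (∑ i : Fin (m+1), ∑ j, (D i j : ℤ) * (i : ℤ))
          - (∑ i : Fin (m+1), ∑ j, (D i j : ℤ)) := by
          simp [Finset.sum_sub_distrib]
      _ = 0 := by rw [T1, T2, T3]; ring
  have hterm : ∀ i j : Fin (m+1), (D i j : ℤ) * ((j : ℤ) - (i : ℤ) - 1) = 0 := by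
    have hnn : ∀ p ∈ (univ : Finset (Fin (m+1) × Fin (m+1))),
        0 ≤ (D p.1 p.2 : ℤ) * ((p.2 : ℤ) - (p.1 : ℤ) - 1) := by
      rintro ⟨i, j⟩ -
      rcases hbin i j with h0 | h1
      · simp [h0]
      · have := hord i j h1
        have hij : (i : ℕ) < (j : ℕ) := this
        rw [h1]
        push_cast
        omega
    have := (Finset.sum_eq_zero_iff_of_nonneg hnn).mp hgsum
    intro i j
    exact this (i, j) (mem_univ _)
  have hcov : ∀ i j : Fin (m+1), D i j = 1 → (j : ℕ) = (i : ℕ) + 1 := by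
    intro i j h1
    have := hterm i j
    rw [h1] at this
    push_cast at this
    have hij : (i : ℕ) < (j : ℕ) := hord i j h1
    omega
  intro i j
  constructor
  · exact hcov i j
  · intro hji
    have hi : i ≠ Fin.last m := by
      intro h
      have : (i : ℕ) = m := by rw [h]; simp
      have := j.isLt
      omega
    have hRi : R i = 1 := hR1 i hi
    have hex : ∃ j' ∈ (univ : Finset (Fin (m+1))), D i j' ≠ 0 := by
      apply Finset.exists_ne_zero_of_sum_ne_zero
      rw [show ∑ j', D i j' = R i from rfl, hRi]
      omega
    obtain ⟨j', -, hj'⟩ := hex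
    have h1 : D i j' = 1 := (hbin i j').resolve_left hj'
    have : (j' : ℕ) = (i : ℕ) + 1 := hcov i j' h1
    have : j' = j := Fin.ext (by omega)
    rwa [this] at h1

theorem stmt_17 {J : Type*} [Fintype J] (r : J → J → Prop) [IsStrictTotalOrder J r]
    (δ : J → J → ℕ)
    (hbin : ∀ a b, δ a b = 0 ∨ δ a b = 1)
    (htot : ∑ a, ∑ b, δ a b = Fintype.card J - 1)
    (hsucc : ∀ a, ∑ b, δ a b ≤ 1)
    (hpred : ∀ b, ∑ a, δ a b ≤ 1)
    (hord : ∀ a b, δ a b = 1 → r a b) :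
    ∀ a b, δ a b = 1 ↔ (r a b ∧ ∀ c, ¬(r a c ∧ r c b)) := by
  classical
  letI : LinearOrder J := linearOrderOfSTO r
  have hr : ∀ a b : J, r a b ↔ a < b := fun a b => Iff.rfl
  set n := Fintype.card J with hn
  let e : Fin n ≃o J := monoEquivOfFin J rfl
  have hsumrow : ∀ a : J, ∑ j : Fin n, δ a (e j) = ∑ b, δ a b :=
    fun a => Equiv.sum_comp e.toEquiv (δ a)
  have hsumcol : ∀ b : J, ∑ i : Fin n, δ (e i) b = ∑ a, δ a b :=
    fun b => Equiv.sum_comp e.toEquiv (fun a => δ a b)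
  have key := stmt17_key (fun i j => δ (e i) (e j))
    (fun i j => hbin _ _)
    (by
      rw [show (∑ i : Fin n, ∑ j : Fin n, δ (e i) (e j)) = ∑ i : Fin n, ∑ b, δ (e i) b from
        Finset.sum_congr rfl fun i _ => hsumrow (e i)]
      exact (Fintype.sum_equiv e.toEquiv _ _ fun i => rfl).trans htot)
    (fun i => by rw [hsumrow (e i)]; exact hsucc _)
    (fun j => by rw [hsumcol (e j)]; exact hpred _)
    (fun i j h => e.lt_iff_lt.mp ((hr _ _).mp (hord _ _ h)))
  intro a b
  have ha : e (e.symm a) = a := e.apply_symm_apply a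
  have hb : e (e.symm b) = b := e.apply_symm_apply b
  have hk : δ a b = 1 ↔ ((e.symm b : Fin n) : ℕ) = ((e.symm a : Fin n) : ℕ) + 1 := by
    simpa [ha, hb] using key (e.symm a) (e.symm b)
  rw [hk]
  constructor
  · intro hj
    constructor
    · rw [hr]
      rw [← ha, ← hb, e.lt_iff_lt, Fin.lt_def]
      omega
    · intro c ⟨h1, h2⟩
      rw [hr] at h1 h2
      rw [← ha, ← e.apply_symm_apply c, e.lt_iff_lt, Fin.lt_def] at h1
      rw [← hb, ← e.apply_symm_apply c, e.lt_iff_lt, Fin.lt_def] at h2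
      omega
  · rintro ⟨h1, h2⟩
    rw [hr, ← ha, ← hb, e.lt_iff_lt, Fin.lt_def] at h1
    by_contra hne
    have hlt : ((e.symm a : Fin n) : ℕ) + 1 < ((e.symm b : Fin n) : ℕ) := by omega
    have hmem : ((e.symm a : Fin n) : ℕ) + 1 < n := lt_trans hlt (e.symm b).isLt
    refine h2 (e ⟨((e.symm a : Fin n) : ℕ) + 1, hmem⟩) ⟨?_, ?_⟩
    · rw [hr]
      have hx : e.symm a < (⟨((e.symm a : Fin n) : ℕ) + 1, hmem⟩ : Fin n) := by
        rw [Fin.lt_def]; simp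
      have := e.lt_iff_lt.mpr hx
      rwa [ha] at this
    · rw [hr]
      have hx : (⟨((e.symm a : Fin n) : ℕ) + 1, hmem⟩ : Fin n) < e.symm b := by
        rw [Fin.lt_def]; simpa using hlt
      have := e.lt_iff_lt.mpr hx
      rwa [hb] at this
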